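/- Let g(z) = Σₙ gₙ zⁿ be the formal power series satisfying g = 1 + (1−t)·zg/(1−zg) over ℚ(t), and set Pₙ(t) so that Pₙ(−t) is the coefficient of zⁿ in g. Then Σ_{n≥0} Pₙ(t)zⁿ = (1 − tz − √((1−tz)² − 4z))/(2z) + 1 (with constant term 1), and the coefficient of tᵏ in Pₙ(t) counts Schröder paths of semilength n with exactly k horizontal steps. -/

import Mathlib

/-- Steps of a Schröder path: up `(1,1)`, down `(1,−1)`, horizontal `(2,0)`. -/
inductive SStep : Type
  | U : SStep
  | D : SStep
  | H : SStep
deriving DecidableEq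

/-- Height change of a step. -/
def SStep.hdiff : SStep → ℤ
  | .U => 1
  | .D => -1
  | .H => 0

/-- Horizontal extent of a step (so a path of semilength `n` has total extent `2n`). -/
def SStep.hlen : SStep → ℕ
  | .U => 1
  | .D => 1
  | .H => 2

/-- A Schröder path of semilength `n`: from `(0,0)` to `(2n,0)`, never going
below the horizontal axis. -/
def IsSchroeder (n : ℕ) (p : List SStep) : Prop :=
  (p.map SStep.hlen).sum = 2 * n ∧ (p.map SStep.hdiff).sum = 0 ∧
    ∀ q : List SStep, q <+: p → 0 ≤ (q.map SStep.hdiff).sum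

open PowerSeries Polynomial

/-!
Substituting `t ↦ -t` turns the equation for `g` into `z h² - (1 - tz) h + 1 = 0` for
`h = Σ Pₙ zⁿ`, that is `P₀ = 1` and `Pₙ₊₁ = t Pₙ + Σ_{i+j=n} Pᵢ Pⱼ`. The polynomials counting
Schröder paths by their horizontal steps satisfy the same recursion, by the first-return
decomposition: a nonempty path is either `H p` or `U p₁ D p₂`, where this `D` is the first step
back to the axis.
-/

namespace SStep

instance : Fintype SStep := ⟨{U, D, H}, fun s => by cases s <;> decide⟩

lemma one_le_hlen (s : SStep) : 1 ≤ s.hlen := by cases s <;> decide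

lemma two_dvd_hlen_sub_hdiff (s : SStep) : (2 : ℤ) ∣ s.hlen - s.hdiff := by cases s <;> decide

end SStep

lemma two_dvd_sum_hlen_sub_sum_hdiff (p : List SStep) :
    (2 : ℤ) ∣ ((p.map SStep.hlen).sum : ℤ) - (p.map SStep.hdiff).sum := by
  induction p with
  | nil => simp
  | cons s p ih =>
    have hs := s.two_dvd_hlen_sub_hdiff
    simp only [List.map_cons, List.sum_cons, Nat.cast_add]
    omega

lemma exists_isSchroeder {p : List SStep} (hsum : (p.map SStep.hdiff).sum = 0)
    (hpre : ∀ q, q <+: p → 0 ≤ (q.map SStep.hdiff).sum) : ∃ n, IsSchroeder n p := by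
  obtain ⟨n, hn⟩ := two_dvd_sum_hlen_sub_sum_hdiff p
  exact ⟨n.toNat, by omega, hsum, hpre⟩

/-- The first return of a path below level `-c`. -/
lemma exists_eq_append_cons_D (r : List SStep) {c : ℤ} (hc : 0 ≤ c)
    (hr : (r.map SStep.hdiff).sum < -c) :
    ∃ p₁ p₂, r = p₁ ++ .D :: p₂ ∧ (p₁.map SStep.hdiff).sum = -c ∧
      ∀ q, q <+: p₁ → -c ≤ (q.map SStep.hdiff).sum := by
  induction r generalizing c with
  | nil => simp at hr; omega
  | cons s r ih =>
    by_cases hD : c = 0 ∧ s = .D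
    · obtain ⟨rfl, rfl⟩ := hD
      exact ⟨[], r, rfl, rfl, fun q hq => by simp [List.prefix_nil.mp hq]⟩
    have hs : 0 ≤ c + s.hdiff := by cases s <;> simp_all [SStep.hdiff] <;> omega
    simp only [List.map_cons, List.sum_cons] at hr
    obtain ⟨p₁, p₂, rfl, hsum, hpre⟩ := ih hs (by omega)
    refine ⟨s :: p₁, p₂, rfl, by simp only [List.map_cons, List.sum_cons]; omega, ?_⟩
    intro q hq
    rcases List.prefix_cons_iff.mp hq with rfl | ⟨q', rfl, hq'⟩
    · simpa using hc
    · have := hpre q' hq'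
      simp only [List.map_cons, List.sum_cons]
      omega

lemma length_le_of_append_cons_D_eq {p₁ p₂ p₁' p₂' : List SStep}
    (h : p₁ ++ .D :: p₂ = p₁' ++ .D :: p₂') (hsum : (p₁.map SStep.hdiff).sum = 0)
    (hpre : ∀ q, q <+: p₁' → 0 ≤ (q.map SStep.hdiff).sum) : p₁'.length ≤ p₁.length := by
  by_contra! hlt
  have hD : p₁ ++ [.D] <+: p₁' := by
    refine List.prefix_of_prefix_length_le ?_ (p₁'.prefix_append (.D :: p₂')) (by simpa using hlt)
    exact h ▸ ⟨p₂, by simp⟩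
  simpa [hsum, SStep.hdiff] using hpre _ hD

namespace IsSchroeder

variable {n : ℕ} {p : List SStep}

lemma length_le (h : IsSchroeder n p) : p.length ≤ 2 * n :=
  h.1 ▸ List.length_map SStep.hlen ▸
    List.length_le_sum_of_one_le _ (by simpa using fun s _ => s.one_le_hlen)

instance (n : ℕ) : Finite {p // IsSchroeder n p} :=
  ((List.finite_length_le SStep (2 * n)).subset fun _ h => length_le h).to_subtype

lemma semilength_unique {m : ℕ} (hm : IsSchroeder m p) (hn : IsSchroeder n p) : m = n := by
  have := hm.1.symm.trans hn.1
  omega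

lemma zero_iff : IsSchroeder 0 p ↔ p = [] := by
  refine ⟨fun h => List.eq_nil_of_length_eq_zero (by simpa using h.length_le), ?_⟩
  rintro rfl
  exact ⟨rfl, rfl, fun q hq => by simp [List.prefix_nil.mp hq]⟩

lemma cons_H_iff : IsSchroeder (n + 1) (.H :: p) ↔ IsSchroeder n p := by
  simp only [IsSchroeder, List.map_cons, List.sum_cons, SStep.hlen, SStep.hdiff, zero_add,
    List.prefix_cons_iff]
  refine and_congr (by omega) (and_congr_right fun _ => ⟨fun h q hq => ?_, fun h q hq => ?_⟩)
  · simpa [SStep.hdiff] using h (.H :: q) (.inr ⟨q, rfl, hq⟩)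
  · rcases hq with rfl | ⟨q, rfl, hq⟩
    · simp
    · simpa [SStep.hdiff] using h q hq

lemma cons_U_append_cons_D {i j : ℕ} {q : List SStep} (hp : IsSchroeder i p)
    (hq : IsSchroeder j q) : IsSchroeder (i + j + 1) (.U :: p ++ .D :: q) := by
  obtain ⟨hp₁, hp₂, hp₃⟩ := hp
  obtain ⟨hq₁, hq₂, hq₃⟩ := hq
  refine ⟨?_, ?_, fun r hr => ?_⟩
  · simp [hp₁, hq₁, SStep.hlen]; ring
  · simp [hp₂, hq₂, SStep.hdiff]
  rw [List.cons_append] at hr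
  rcases List.prefix_cons_iff.mp hr with rfl | ⟨r, rfl, hr'⟩
  · simp
  rcases le_or_gt r.length p.length with hle | hlt
  · have := hp₃ r (List.prefix_of_prefix_length_le hr' (p.prefix_append _) hle)
    simp [SStep.hdiff]
    omega
  · obtain ⟨s, rfl⟩ := List.prefix_of_prefix_length_le (p.prefix_append _) hr' hlt.le
    rw [List.prefix_append_right_inj, List.prefix_cons_iff] at hr'
    rcases hr' with rfl | ⟨s, rfl, hs⟩
    · simp at hlt
    · have := hq₃ s hs
      simp [hp₂, SStep.hdiff]
      omega

lemma append_cons_D_inj {i i' : ℕ} {p₁ p₂ p₁' p₂' : List SStep}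
    (h : p₁ ++ .D :: p₂ = p₁' ++ .D :: p₂') (h₁ : IsSchroeder i p₁) (h₁' : IsSchroeder i' p₁') :
    p₁ = p₁' ∧ p₂ = p₂' :=
  (List.append_inj h (le_antisymm (length_le_of_append_cons_D_eq h.symm h₁'.2.1 h₁.2.2)
    (length_le_of_append_cons_D_eq h h₁.2.1 h₁'.2.2))).imp_right fun h => (List.cons.inj h).2

/-- First-return decomposition: a nonempty Schröder path is `H p'` or `U p₁ D p₂`. -/
lemma cases_succ (h : IsSchroeder (n + 1) p) :
    (∃ p', p = .H :: p' ∧ IsSchroeder n p') ∨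
      ∃ i j p₁ p₂, i + j = n ∧ p = .U :: p₁ ++ .D :: p₂ ∧ IsSchroeder i p₁ ∧ IsSchroeder j p₂ := by
  have ⟨hlen, hsum, hpre⟩ := h
  rcases p with _ | ⟨_ | _ | _, r⟩
  · simp at hlen
  · right
    obtain ⟨p₁, p₂, rfl, hsum₁, hpre₁⟩ :=
      exists_eq_append_cons_D r le_rfl (by simp [SStep.hdiff] at hsum; omega)
    have hsum₂ : (p₂.map SStep.hdiff).sum = 0 := by simp [hsum₁, SStep.hdiff] at hsum; omega
    have hpre₂ (q : List SStep) (hq : q <+: p₂) : 0 ≤ (q.map SStep.hdiff).sum := by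
      have := hpre (.U :: p₁ ++ .D :: q) (by simpa using hq)
      simpa [hsum₁, SStep.hdiff] using this
    obtain ⟨i, hi⟩ := exists_isSchroeder (by simpa using hsum₁) (by simpa using hpre₁)
    obtain ⟨j, hj⟩ := exists_isSchroeder hsum₂ hpre₂
    have hij := semilength_unique (hi.cons_U_append_cons_D hj) h
    exact ⟨i, j, p₁, p₂, by omega, rfl, hi, hj⟩
  · simpa [SStep.hdiff] using hpre [.D] (by simp)
  · exact .inl ⟨r, rfl, cons_H_iff.mp h⟩

end IsSchroeder

noncomputable instance (n : ℕ) : Fintype {p // IsSchroeder n p} := Fintype.ofFinite _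

open Finset

/-- The generating polynomial of Schröder paths of semilength `n`, with `X` marking
horizontal steps. -/
noncomputable def schroederPoly (R : Type*) [CommSemiring R] (n : ℕ) : R[X] :=
  ∑ p : {p // IsSchroeder n p}, Polynomial.X ^ p.1.count .H

section schroederPoly

variable (R : Type*) [CommSemiring R]

lemma coeff_schroederPoly (n k : ℕ) :
    (schroederPoly R n).coeff k = Nat.card {p // IsSchroeder n p ∧ p.count .H = k} := by
  classical
  rw [schroederPoly, finsetSum_coeff,
    ← Nat.card_congr (Equiv.subtypeSubtypeEquivSubtypeInter _ _), Nat.card_eq_fintype_card,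
    Fintype.card_subtype]
  simp [Polynomial.coeff_X_pow, Finset.sum_boole, eq_comm]

lemma schroederPoly_zero : schroederPoly R 0 = 1 := by
  have : Unique {p // IsSchroeder 0 p} :=
    ⟨⟨⟨[], IsSchroeder.zero_iff.mpr rfl⟩⟩, fun p => Subtype.ext (IsSchroeder.zero_iff.mp p.2)⟩
  rw [schroederPoly, Fintype.sum_unique, IsSchroeder.zero_iff.mp (default : {p // _}).2]
  simp

/-- Gluing map inverse to the first-return decomposition. -/
def schroederJoin (n : ℕ) :
    {p // IsSchroeder n p} ⊕
        (Σ ij : antidiagonal n, {p // IsSchroeder ij.1.1 p} × {p // IsSchroeder ij.1.2 p}) →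
      {p // IsSchroeder (n + 1) p}
  | .inl p => ⟨.H :: p, IsSchroeder.cons_H_iff.mpr p.2⟩
  | .inr ⟨ij, p, q⟩ =>
    ⟨.U :: p ++ .D :: q, by simpa [mem_antidiagonal.mp ij.2] using p.2.cons_U_append_cons_D q.2⟩

lemma schroederJoin_bijective (n : ℕ) : Function.Bijective (schroederJoin n) := by
  constructor
  · rintro (p | ⟨⟨⟨i, j⟩, hij⟩, p, q⟩) (p' | ⟨⟨⟨i', j'⟩, hij'⟩, p', q'⟩) h <;>
      simp only [schroederJoin, Subtype.mk.injEq, List.cons_append, List.cons.injEq,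
        reduceCtorEq, false_and, true_and] at h
    · exact congrArg _ (Subtype.ext h)
    · obtain ⟨hp, hq⟩ := IsSchroeder.append_cons_D_inj h p.2 p'.2
      obtain rfl : i = i' := IsSchroeder.semilength_unique p.2 (hp ▸ p'.2)
      obtain rfl : j = j' := by
        have := mem_antidiagonal.mp hij
        have := mem_antidiagonal.mp hij'
        omega
      obtain rfl := Subtype.ext hp
      obtain rfl := Subtype.ext hq
      rfl
  · rintro ⟨p, hp⟩
    rcases hp.cases_succ with ⟨p', rfl, hp'⟩ | ⟨i, j, p₁, p₂, hij, rfl, h₁, h₂⟩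
    · exact ⟨.inl ⟨p', hp'⟩, rfl⟩
    · exact ⟨.inr ⟨⟨(i, j), mem_antidiagonal.mpr hij⟩, ⟨p₁, h₁⟩, ⟨p₂, h₂⟩⟩, rfl⟩

lemma schroederPoly_succ (n : ℕ) :
    schroederPoly R (n + 1) = Polynomial.X * schroederPoly R n +
      ∑ ij ∈ antidiagonal n, schroederPoly R ij.1 * schroederPoly R ij.2 := by
  rw [schroederPoly, ← (schroederJoin_bijective n).sum_comp, Fintype.sum_sum_type,
    Fintype.sum_sigma, ← Finset.sum_coe_sort (antidiagonal n)]
  congr 1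
  · simp [schroederJoin, schroederPoly, Finset.mul_sum, pow_succ, mul_comm]
  · refine Fintype.sum_congr _ _ fun ⟨(i, j), hij⟩ => ?_
    simp [schroederJoin, schroederPoly, Fintype.sum_mul_sum, Fintype.sum_prod_type,
      List.count_append, pow_add]

end schroederPoly

namespace PowerSeries

variable {R : Type*} [CommRing R] {t : R} {h : R⟦X⟧}

lemma coeff_zero_of_quadratic (hq : X * h ^ 2 - (1 - C t * X) * h + 1 = 0) : coeff 0 h = 1 := by
  simpa using congrArg (coeff 0) (by linear_combination -hq : h = 1 + C t * X * h + X * h ^ 2)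

lemma coeff_succ_of_quadratic (hq : X * h ^ 2 - (1 - C t * X) * h + 1 = 0) (n : ℕ) :
    coeff (n + 1) h = t * coeff n h + ∑ ij ∈ antidiagonal n, coeff ij.1 h * coeff ij.2 h := by
  have := congrArg (coeff (n + 1))
    (by linear_combination -hq : h = 1 + C t * (X * h) + X * (h * h))
  rwa [map_add, map_add, coeff_one, if_neg n.succ_ne_zero, zero_add, coeff_C_mul,
    coeff_succ_X_mul, coeff_succ_X_mul, coeff_mul] at this

end PowerSeries

lemma eq_schroederPoly_of_quadratic {R : Type*} [CommRing R] {a : ℕ → R[X]}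
    (hq : PowerSeries.X * (PowerSeries.mk a) ^ 2 -
      (1 - PowerSeries.C Polynomial.X * PowerSeries.X) * PowerSeries.mk a + 1 = 0) :
    a = schroederPoly R := by
  funext n
  induction n using Nat.strong_induction_on with
  | _ n ih =>
    cases n with
    | zero => simpa [schroederPoly_zero] using PowerSeries.coeff_zero_of_quadratic hq
    | succ n =>
      have := PowerSeries.coeff_succ_of_quadratic hq n
      simp only [PowerSeries.coeff_mk] at this
      rw [this, schroederPoly_succ, ih n n.lt_succ_self]
      congr 1
      refine sum_congr rfl fun ij hij => ?_
      have := mem_antidiagonal.mp hij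
      rw [ih ij.1 (by omega), ih ij.2 (by omega)]

/-- Let `g ∈ ℚ[t][[z]]` satisfy `g = 1 + (1−t)·zg/(1−zg)` (in cleared form), and
let `Pₙ(t)` be defined by `Pₙ(−t) = [zⁿ] g`. Then `h(z) = Σ Pₙ(t)zⁿ` is the
algebraic series `(1 − tz − √((1−tz)² − 4z))/(2z)` (with constant term 1), i.e.
`z h² − (1−tz) h + 1 = 0`, and the coefficient of `tᵏ` in `Pₙ(t)` counts
Schröder paths of semilength `n` with exactly `k` horizontal steps. -/
theorem super_narayana_schroeder (g : PowerSeries (Polynomial ℚ))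
    (heq : (1 - PowerSeries.X * g) * g =
      (1 - PowerSeries.X * g) +
        PowerSeries.C (R := Polynomial ℚ) (1 - Polynomial.X) * PowerSeries.X * g)
    (P : ℕ → Polynomial ℚ)
    (hP : ∀ n, P n = (PowerSeries.coeff (R := Polynomial ℚ) n g).comp (-Polynomial.X)) :
    (PowerSeries.X * (PowerSeries.mk P) ^ 2 -
        (1 - PowerSeries.C (R := Polynomial ℚ) Polynomial.X * PowerSeries.X) *
          PowerSeries.mk P + 1 = 0) ∧
    ∀ n k : ℕ, (P n).coeff k =
      (Nat.card {p : List SStep // IsSchroeder n p ∧ p.count SStep.H = k} : ℚ) := by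
  set φ := PowerSeries.map (compRingHom (-Polynomial.X : ℚ[X]))
  have hφg : φ g = PowerSeries.mk P := by
    ext n
    simp [φ, hP]
  have hquad : PowerSeries.X * (PowerSeries.mk P) ^ 2 -
      (1 - PowerSeries.C Polynomial.X * PowerSeries.X) * PowerSeries.mk P + 1 = 0 := by
    have := congrArg φ heq
    simp only [φ, map_mul, map_sub, map_one, map_add, PowerSeries.map_X, PowerSeries.map_C,
      map_neg, coe_compRingHom_apply, X_comp] at this
    rw [hφg] at this
    linear_combination -this
  refine ⟨hquad, fun n k => ?_⟩
  rw [eq_schroederPoly_of_quadratic hquad, coeff_schroederPoly]
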